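/- Let n ≥ 2 and let u₁, …, u_m ∈ ℝⁿ be distinct points. Then the n·m functions ω ↦ ω_k · exp(i⟨u_ℓ, ω⟩), for 1 ≤ k ≤ n and 1 ≤ ℓ ≤ m, are linearly independent as complex-valued functions on the unit sphere S^{n-1}. -/

import Mathlib

/-!
Write a vanishing combination as `∑ᵢ Lᵢ ω · exp (I ⟪uᵢ, ω⟫)` with `ℝ`-linear `Lᵢ`, pick a unit
`w` separating the numbers `⟪uᵢ, w⟫`, and let `i₀` minimise `⟪uᵢ, w⟫` among the nonzero `Lᵢ`.
On a great circle `ω = cos θ • v + sin θ • w` with `v ⊥ w` the sum is an entire function of `θ`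
vanishing on `ℝ`. At `θ = t I` the `i₀`-th term has size `≍ exp (t - ⟪u i₀, w⟫ sinh t)`, which
dominates all others as `t → ∞`; hence `L i₀ v + L i₀ w · I = 0`. Doing the same with `-v` gives
`L i₀ v = L i₀ w = 0`, so `L i₀` vanishes on `w` and on `wᗮ`, a contradiction.
-/

open Complex Filter Topology
open scoped RealInnerProductSpace

theorem Differentiable.eq_zero_of_forall_ofReal_eq_zero {F : Type*} [NormedAddCommGroup F]
    [NormedSpace ℂ F] [CompleteSpace F] {g : ℂ → F} (hg : Differentiable ℂ g)
    (h : ∀ x : ℝ, g x = 0) : g = 0 := by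
  have hreal : Tendsto ((↑) : ℝ → ℂ) (𝓝[≠] 0) (𝓝[≠] 0) :=
    tendsto_nhdsWithin_of_tendsto_nhds_of_eventually_within _
      (continuous_ofReal.tendsto' 0 0 ofReal_zero |>.mono_left nhdsWithin_le_nhds)
      (eventually_nhdsWithin_of_forall fun x hx => ofReal_ne_zero.2 hx)
  exact (analyticOnNhd_univ_iff_differentiable.2 hg).eq_of_frequently_eq analyticOnNhd_const
    (hreal.frequently (.of_forall h))

theorem norm_exp_I_mul_cos_mul_I_add_sin_mul_I (α β t : ℝ) :
    ‖exp (I * (α * cos (t * I) + β * sin (t * I)))‖ = Real.exp (-(β * Real.sinh t)) := by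
  simp [norm_exp, cos_mul_I, sin_mul_I, sinh_ofReal_re]

theorem two_mul_exp_neg_mul_cos_mul_I_add_sin_mul_I (a b : ℂ) (t : ℝ) :
    2 * exp (-t) * (a * cos (t * I) + b * sin (t * I)) =
      a * (1 + exp (-2 * t)) + b * I * (1 - exp (-2 * t)) := by
  have h1 : exp (-t) * exp t = 1 := by rw [← exp_add]; simp
  have h2 : exp (-t) * exp (-t) = exp (-2 * t) := by rw [← exp_add]; ring_nf
  rw [cos_mul_I, sin_mul_I, cosh, sinh]
  linear_combination (a - b * I) * h2 + (a + b * I) * h1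

theorem tendsto_two_mul_exp_neg_mul_cos_mul_I_add_sin_mul_I_atTop (a b : ℂ) :
    Tendsto (fun t : ℝ => 2 * exp (-t) * (a * cos (t * I) + b * sin (t * I))) atTop
      (𝓝 (a + b * I)) := by
  have hq : Tendsto (fun t : ℝ => exp (-2 * t)) atTop (𝓝 0) := by
    rw [tendsto_zero_iff_norm_tendsto_zero]
    convert Real.tendsto_exp_neg_atTop_nhds_zero.comp (tendsto_id.const_mul_atTop two_pos) using 2
    simp [norm_exp]
  simp only [two_mul_exp_neg_mul_cos_mul_I_add_sin_mul_I]
  simpa using ((hq.const_add 1).const_mul a).add ((hq.const_sub 1).const_mul (b * I))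

theorem tendsto_exp_I_mul_cos_mul_I_add_sin_mul_I_atTop (α : ℝ) {β : ℝ} (hβ : 0 < β) :
    Tendsto (fun t : ℝ => exp (I * (α * cos (t * I) + β * sin (t * I)))) atTop (𝓝 0) := by
  rw [tendsto_zero_iff_norm_tendsto_zero]
  simp only [norm_exp_I_mul_cos_mul_I_add_sin_mul_I]
  exact Real.tendsto_exp_atBot.comp <| tendsto_neg_atTop_atBot.comp <|
    Real.sinhOrderIso.tendsto_atTop.const_mul_atTop hβ

theorem add_mul_I_eq_zero_of_forall_sum_cos_sin_mul_exp_eq_zero {ι : Type*} {s : Finset ι}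
    {i₀ : ι} (hi₀ : i₀ ∈ s) {α β : ι → ℝ} (hβ : ∀ i ∈ s, i ≠ i₀ → β i₀ < β i) (a b : ι → ℂ)
    (h : ∀ θ : ℝ, ∑ i ∈ s, (a i * cos θ + b i * sin θ) *
      exp (I * (α i * cos θ + β i * sin θ)) = 0) :
    a i₀ + b i₀ * I = 0 := by
  classical
  let g : ℂ → ℂ := fun z => ∑ i ∈ s, (a i * cos z + b i * sin z) *
    exp (I * (α i * cos z + β i * sin z))
  have hg : g = 0 := Differentiable.eq_zero_of_forall_ofReal_eq_zero (by fun_prop) h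
  -- `g (t * I)` rescaled by `2 exp (-t) exp (-I (α i₀ cos (t I) + β i₀ sin (t I)))`
  let T : ι → ℝ → ℂ := fun i t => 2 * exp (-t) * (a i * cos (t * I) + b i * sin (t * I)) *
    exp (I * ((α i - α i₀ : ℝ) * cos (t * I) + (β i - β i₀ : ℝ) * sin (t * I)))
  have hT : ∀ t, T i₀ t + ∑ i ∈ s.erase i₀, T i t = 0 := by
    intro t
    have : ∑ i ∈ s, T i t =
        2 * exp (-t) * exp (-(I * (α i₀ * cos (t * I) + β i₀ * sin (t * I)))) * g (t * I) := by
      simp only [g, Finset.mul_sum]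
      refine Finset.sum_congr rfl fun i _ => ?_
      dsimp only [T]
      rw [show ∀ c s : ℂ, I * ((α i - α i₀ : ℝ) * c + (β i - β i₀ : ℝ) * s) =
          -(I * (α i₀ * c + β i₀ * s)) + I * (α i * c + β i * s) from
        fun c s => by push_cast; ring, exp_add]
      ring
    rw [Finset.add_sum_erase s (T · t) hi₀, this, hg, Pi.zero_apply, mul_zero]
  have hT₀ : Tendsto (T i₀) atTop (𝓝 (a i₀ + b i₀ * I)) := by
    simpa only [T, sub_self, ofReal_zero, zero_mul, add_zero, mul_zero, exp_zero, mul_one] using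
      tendsto_two_mul_exp_neg_mul_cos_mul_I_add_sin_mul_I_atTop (a i₀) (b i₀)
  have hT' : ∀ i ∈ s.erase i₀, Tendsto (T i) atTop (𝓝 0) := fun i hi => by
    simpa only [mul_zero] using
      (tendsto_two_mul_exp_neg_mul_cos_mul_I_add_sin_mul_I_atTop (a i) (b i)).mul
        (tendsto_exp_I_mul_cos_mul_I_add_sin_mul_I_atTop (α i - α i₀)
          (sub_pos.2 (hβ i (Finset.mem_of_mem_erase hi) (Finset.ne_of_mem_erase hi))))
  have hsum := hT₀.add (tendsto_finsetSum _ hT')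
  simp only [hT, Finset.sum_const_zero, add_zero] at hsum
  exact tendsto_nhds_unique tendsto_const_nhds hsum |>.symm

section InnerProductSpace

variable {E : Type*} [NormedAddCommGroup E] [InnerProductSpace ℝ E]

theorem exists_norm_eq_one_injOn_inner [Nontrivial E] {ι : Type*} {s : Finset ι} {u : ι → E}
    (hu : Set.InjOn u s) : ∃ w : E, ‖w‖ = 1 ∧ Set.InjOn (fun i => ⟪u i, w⟫) s := by
  classical
  let P : Finset (Submodule ℝ E) :=
    insert ⊥ (s.offDiag.image fun p => (ℝ ∙ (u p.1 - u p.2))ᗮ)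
  have hP : ⊤ ∉ P := by
    simp only [P, Finset.mem_insert, Finset.mem_image, Finset.mem_offDiag, not_or, not_exists,
      not_and, Submodule.orthogonal_eq_top_iff, Submodule.span_singleton_eq_bot, sub_eq_zero]
    exact ⟨top_ne_bot, fun p hp => hp.2.2 ∘ hu hp.1 hp.2.1⟩
  obtain ⟨w, hw⟩ :=
    (Set.ne_univ_iff_exists_notMem _).1 (Subspace.biUnion_ne_univ_of_top_notMem hP)
  simp only [Set.mem_iUnion, not_exists] at hw
  have hw₀ : w ≠ 0 := fun h => hw ⊥ (Finset.mem_insert_self _ _) (by simp [h])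
  refine ⟨‖w‖⁻¹ • w, norm_smul_inv_norm hw₀, fun i hi j hj hij => by_contra fun hne => ?_⟩
  refine hw _ (Finset.mem_insert_of_mem (Finset.mem_image_of_mem _
    (show (i, j) ∈ s.offDiag from Finset.mem_offDiag.2 ⟨hi, hj, hne⟩))) ?_
  simp only [real_inner_smul_right] at hij
  rw [SetLike.mem_coe, Submodule.mem_orthogonal_singleton_iff_inner_right, inner_sub_left,
    sub_eq_zero]
  exact mul_left_cancel₀ (inv_ne_zero (norm_ne_zero_iff.2 hw₀)) hij

theorem exists_norm_eq_one_inner_eq_zero [FiniteDimensional ℝ E] (hE : 2 ≤ Module.finrank ℝ E)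
    (w : E) : ∃ v : E, ‖v‖ = 1 ∧ ⟪v, w⟫ = 0 := by
  have hK : (ℝ ∙ w) ≠ ⊤ := fun h => by
    have : Module.finrank ℝ (ℝ ∙ w) ≤ 1 := (finrank_span_le_card _).trans (by simp)
    rw [h, finrank_top] at this
    omega
  obtain ⟨v, hv, hv₀⟩ := Submodule.ne_bot_iff _ |>.1 <| (Submodule.orthogonal_eq_bot_iff).not.2 hK
  exact ⟨‖v‖⁻¹ • v, norm_smul_inv_norm hv₀, by
    rw [real_inner_smul_left, Submodule.mem_orthogonal_singleton_iff_inner_left.1 hv, mul_zero]⟩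

theorem norm_cos_smul_add_sin_smul {v w : E} (hv : ‖v‖ = 1) (hw : ‖w‖ = 1) (hvw : ⟪v, w⟫ = 0)
    (θ : ℝ) : ‖Real.cos θ • v + Real.sin θ • w‖ = 1 := by
  have h := norm_add_sq_eq_norm_sq_add_norm_sq_real
    (by rw [real_inner_smul_left, real_inner_smul_right, hvw, mul_zero, mul_zero] :
      ⟪Real.cos θ • v, Real.sin θ • w⟫ = 0)
  simp only [norm_smul, hv, hw, mul_one, Real.norm_eq_abs, abs_mul_abs_self] at h
  rwa [← sq, ← sq, ← sq, Real.cos_sq_add_sin_sq,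
    pow_eq_one_iff_of_nonneg (norm_nonneg _) two_ne_zero] at h

theorem LinearMap.eq_zero_of_apply_add_apply_mul_I_eq_zero
    [FiniteDimensional ℝ E] (hE : 2 ≤ Module.finrank ℝ E) (L : E →ₗ[ℝ] ℂ) {w : E}
    (h : ∀ v : E, ‖v‖ = 1 → ⟪v, w⟫ = 0 → L v + L w * I = 0) : L = 0 := by
  -- `-v` satisfies the hypothesis as well
  have hv : ∀ v : E, ‖v‖ = 1 → ⟪v, w⟫ = 0 → L v = 0 := fun v hv hvw => by
    have := h (-v) (by rwa [norm_neg]) (by rw [inner_neg_left, hvw, neg_zero])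
    rw [map_neg] at this
    linear_combination (h v hv hvw - this) / 2
  have hw : L w = 0 := by
    obtain ⟨v, hv₁, hvw⟩ := exists_norm_eq_one_inner_eq_zero hE w
    simpa [hv v hv₁ hvw] using h v hv₁ hvw
  have hK : (ℝ ∙ w)ᗮ ≤ LinearMap.ker L := fun x hx => by
    rcases eq_or_ne x 0 with rfl | hx₀
    · exact zero_mem _
    have := hv (‖x‖⁻¹ • x) (norm_smul_inv_norm hx₀) (by
      rw [real_inner_smul_left, Submodule.mem_orthogonal_singleton_iff_inner_left.1 hx, mul_zero])
    rw [map_smul, smul_eq_zero] at this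
    exact this.resolve_left (inv_ne_zero (norm_ne_zero_iff.2 hx₀))
  rw [← LinearMap.ker_eq_top, eq_top_iff,
    ← Submodule.sup_orthogonal_of_hasOrthogonalProjection (K := ℝ ∙ w)]
  exact sup_le ((Submodule.span_singleton_le_iff_mem _ _).2 hw) hK

theorem eq_zero_of_forall_norm_eq_one_sum_apply_mul_exp_inner_eq_zero [FiniteDimensional ℝ E]
    (hE : 2 ≤ Module.finrank ℝ E) {ι : Type*} {s : Finset ι} {u : ι → E} (hu : Set.InjOn u s)
    {L : ι → E →ₗ[ℝ] ℂ} (h : ∀ ω : E, ‖ω‖ = 1 → ∑ i ∈ s, L i ω * exp (I * ⟪u i, ω⟫) = 0) :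
    ∀ i ∈ s, L i = 0 := by
  classical
  by_contra! hne
  have : Nontrivial E := Module.nontrivial_of_finrank_pos (R := ℝ) (by omega)
  obtain ⟨w, hw, hinj⟩ := exists_norm_eq_one_injOn_inner hu
  let t := s.filter (L · ≠ 0)
  obtain ⟨i₀, hi₀, hmin⟩ := t.exists_min_image (fun i => ⟪u i, w⟫) (by
    obtain ⟨i, hi, hLi⟩ := hne
    exact ⟨i, Finset.mem_filter.2 ⟨hi, hLi⟩⟩)
  have hβ : ∀ i ∈ t, i ≠ i₀ → ⟪u i₀, w⟫ < ⟪u i, w⟫ := fun i hi hii₀ =>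
    (hmin i hi).lt_of_ne fun heq =>
      hii₀ (hinj (Finset.mem_filter.1 hi).1 (Finset.mem_filter.1 hi₀).1 heq.symm)
  refine (Finset.mem_filter.1 hi₀).2 <|
    (L i₀).eq_zero_of_apply_add_apply_mul_I_eq_zero hE (w := w) fun v hv hvw => ?_
  refine add_mul_I_eq_zero_of_forall_sum_cos_sin_mul_exp_eq_zero hi₀ (α := fun i => ⟪u i, v⟫)
    (β := fun i => ⟪u i, w⟫) hβ (fun i => L i v) (fun i => L i w) fun θ => ?_
  rw [← h _ (norm_cos_smul_add_sin_smul hv hw hvw θ),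
    ← Finset.sum_filter_of_ne (s := s) (p := (L · ≠ 0)) fun i _ hi hLi => hi (by simp [hLi])]
  refine Finset.sum_congr rfl fun i _ => ?_
  simp only [map_add, map_smul, inner_add_right, real_inner_smul_right, Complex.real_smul,
    ofReal_add, ofReal_mul, ofReal_cos, ofReal_sin]
  ring_nf

end InnerProductSpace

/-- Linear independence on the sphere of the functions `ω ↦ ω k · exp(i⟨u ℓ, ω⟩)`
for distinct points `u ℓ ∈ ℝⁿ`, `n ≥ 2`, `1 ≤ k ≤ n`. -/
theorem coord_mul_exp_linearIndependent_on_sphere (n m : ℕ) (hn : 2 ≤ n)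
    (u : Fin m → EuclideanSpace ℝ (Fin n)) (hu : Function.Injective u) :
    LinearIndependent ℂ
      (fun p : Fin n × Fin m =>
        (fun ω : Metric.sphere (0 : EuclideanSpace ℝ (Fin n)) 1 =>
          ((ω : EuclideanSpace ℝ (Fin n)) p.1 : ℂ) *
            Complex.exp (Complex.I *
              (inner ℝ (u p.2) (ω : EuclideanSpace ℝ (Fin n)) : ℝ))
          : Metric.sphere (0 : EuclideanSpace ℝ (Fin n)) 1 → ℂ)) := by
  rw [Fintype.linearIndependent_iff]
  intro g hg p
  let L : Fin m → EuclideanSpace ℝ (Fin n) →ₗ[ℝ] ℂ := fun ℓ =>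
    ∑ k, g (k, ℓ) • (ofRealCLM.toLinearMap ∘ₗ (EuclideanSpace.proj k).toLinearMap)
  have hL := eq_zero_of_forall_norm_eq_one_sum_apply_mul_exp_inner_eq_zero
    (by rwa [finrank_euclideanSpace_fin]) (s := Finset.univ) hu.injOn (L := L) fun ω hω => by
      have := congrFun hg ⟨ω, mem_sphere_zero_iff_norm.2 hω⟩
      simp only [Finset.sum_apply, Pi.smul_apply, smul_eq_mul, Pi.zero_apply,
        Fintype.sum_prod_type_right] at this
      rw [← this]
      simp [L, Finset.sum_mul, mul_assoc]
  have := LinearMap.congr_fun (hL p.2 (Finset.mem_univ _)) (EuclideanSpace.single p.1 1)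
  simpa [L, apply_ite ((↑) : ℝ → ℂ)] using this
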